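/- arXiv:1806.10790 — 8 statements merged into one kernel-verified Lean document; each statement's English description precedes it below -/
import Mathlib

section
/- Let A be an m×n real matrix whose columns A_1,…,A_n all have ℓ2-norm 1, and let s ∈ {1,…,n}. Then for every s-sparse vector x ∈ ℝ^n, (1 − μ₁(A, s−1))·‖x‖₂² ≤ ‖Ax‖₂² ≤ (1 + μ₁(A, s−1))·‖x‖₂². -/
/-!
Expanding `‖Ax‖₂²` over the support `S` of `x` gives the quadratic form of the Gram matrix
`G i j = ⟨A_i, A_j⟩`, whose diagonal is `1` by the normalization of the columns. Hence
`‖Ax‖₂² - ‖x‖₂² = ∑_{i ≠ j ∈ S} x_i x_j G_ij`. Bounding `|x_i x_j| ≤ (x_i² + x_j²) / 2` and using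
the symmetry of `G`, this is at most `∑_{i ∈ S} x_i² ∑_{j ∈ S \ {i}} |G_ij|` in absolute value, and
each inner sum runs over `|S| - 1 ≤ s - 1` indices different from `i`, so it is at most `μ₁(A, s-1)`.
-/

open scoped Classical

/-- Cumulative coherence function μ₁(A, s) of a matrix `A` with columns `A_1, …, A_n`:
the supremum over index sets `S` with `|S| ≤ s` and indices `i ∉ S` of
`∑_{j ∈ S} |⟨A_i, A_j⟩|`. -/
noncomputable def mu1 {m n : ℕ} (A : Matrix (Fin m) (Fin n) ℝ) (s : ℕ) : ℝ :=
  sSup {t : ℝ | ∃ S : Finset (Fin n), S.card ≤ s ∧ ∃ i : Fin n, i ∉ S ∧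
    t = ∑ j ∈ S, |∑ k : Fin m, A k i * A k j|}

open Finset

section OffDiagonal

variable {ι : Type*} [DecidableEq ι] (S : Finset ι) (x : ι → ℝ) {G : ι → ι → ℝ}

theorem sum_sum_erase_comm (f : ι → ι → ℝ) :
    ∑ i ∈ S, ∑ j ∈ S.erase i, f i j = ∑ i ∈ S, ∑ j ∈ S.erase i, f j i :=
  sum_comm' fun i j => by simp only [mem_erase]; tauto

theorem sum_sum_erase_abs_mul_le (hG : ∀ i j, |G i j| = |G j i|) :
    ∑ i ∈ S, ∑ j ∈ S.erase i, |x i * x j| * |G i j| ≤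
      ∑ i ∈ S, x i ^ 2 * ∑ j ∈ S.erase i, |G i j| := by
  have hamgm : ∀ i j, 2 * (|x i * x j| * |G i j|) ≤ (x i ^ 2 + x j ^ 2) * |G i j| := fun i j => by
    have h := mul_le_mul_of_nonneg_right (two_mul_le_add_sq |x i| |x j|) (abs_nonneg (G i j))
    rw [sq_abs, sq_abs] at h
    rw [abs_mul]
    linarith
  have hswap : ∑ i ∈ S, ∑ j ∈ S.erase i, x j ^ 2 * |G i j| =
      ∑ i ∈ S, ∑ j ∈ S.erase i, x i ^ 2 * |G i j| := by
    rw [sum_sum_erase_comm]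
    simp only [hG]
  have htotal : 2 * ∑ i ∈ S, ∑ j ∈ S.erase i, |x i * x j| * |G i j| ≤
      2 * ∑ i ∈ S, ∑ j ∈ S.erase i, x i ^ 2 * |G i j| :=
    calc 2 * ∑ i ∈ S, ∑ j ∈ S.erase i, |x i * x j| * |G i j|
        ≤ ∑ i ∈ S, ∑ j ∈ S.erase i, (x i ^ 2 + x j ^ 2) * |G i j| := by
          rw [mul_sum]
          exact sum_le_sum fun i _ => by rw [mul_sum]; exact sum_le_sum fun j _ => hamgm i j
      _ = 2 * ∑ i ∈ S, ∑ j ∈ S.erase i, x i ^ 2 * |G i j| := by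
          simp only [add_mul, sum_add_distrib, hswap]
          ring
  simpa only [mul_sum] using le_of_mul_le_mul_left htotal two_pos

theorem abs_sum_sum_erase_mul_le (hG : ∀ i j, |G i j| = |G j i|) {μ : ℝ}
    (hμ : ∀ i ∈ S, ∑ j ∈ S.erase i, |G i j| ≤ μ) :
    |∑ i ∈ S, ∑ j ∈ S.erase i, x i * x j * G i j| ≤ μ * ∑ i ∈ S, x i ^ 2 :=
  calc |∑ i ∈ S, ∑ j ∈ S.erase i, x i * x j * G i j|
      ≤ ∑ i ∈ S, ∑ j ∈ S.erase i, |x i * x j| * |G i j| := by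
        refine (abs_sum_le_sum_abs _ S).trans (sum_le_sum fun i _ => ?_)
        exact (abs_sum_le_sum_abs _ _).trans_eq (by simp only [abs_mul])
    _ ≤ ∑ i ∈ S, x i ^ 2 * ∑ j ∈ S.erase i, |G i j| := sum_sum_erase_abs_mul_le S x hG
    _ ≤ ∑ i ∈ S, x i ^ 2 * μ :=
        sum_le_sum fun i hi => mul_le_mul_of_nonneg_left (hμ i hi) (sq_nonneg _)
    _ = μ * ∑ i ∈ S, x i ^ 2 := by rw [← sum_mul, mul_comm]

theorem sum_sum_mul_eq_sum_sq_add_sum_sum_erase (hdiag : ∀ i ∈ S, G i i = 1) :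
    ∑ i ∈ S, ∑ j ∈ S, x i * x j * G i j =
      ∑ i ∈ S, x i ^ 2 + ∑ i ∈ S, ∑ j ∈ S.erase i, x i * x j * G i j := by
  rw [← sum_add_distrib]
  refine sum_congr rfl fun i hi => ?_
  rw [← add_sum_erase S _ hi, hdiag i hi]
  ring

theorem abs_sum_sum_mul_sub_sum_sq_le (hdiag : ∀ i ∈ S, G i i = 1)
    (hG : ∀ i j, |G i j| = |G j i|) {μ : ℝ} (hμ : ∀ i ∈ S, ∑ j ∈ S.erase i, |G i j| ≤ μ) :
    |∑ i ∈ S, ∑ j ∈ S, x i * x j * G i j - ∑ i ∈ S, x i ^ 2| ≤ μ * ∑ i ∈ S, x i ^ 2 := by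
  rw [sum_sum_mul_eq_sum_sq_add_sum_sum_erase S x hdiag, add_sub_cancel_left]
  exact abs_sum_sum_erase_mul_le S x hG hμ

end OffDiagonal

theorem sum_mulVec_sq_eq_sum_sum_gram {m n : ℕ} (A : Matrix (Fin m) (Fin n) ℝ)
    {x : Fin n → ℝ} (S : Finset (Fin n)) (hx : ∀ i ∉ S, x i = 0) :
    ∑ k, A.mulVec x k ^ 2 = ∑ i ∈ S, ∑ j ∈ S, x i * x j * ∑ k, A k i * A k j := by
  have hmulVec : ∀ k, A.mulVec x k = ∑ i ∈ S, A k i * x i := fun k =>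
    (sum_subset (subset_univ S) fun i _ hi => by rw [hx i hi, mul_zero]).symm
  simp only [hmulVec, sq, sum_mul_sum]
  simp only [mul_sum]
  rw [sum_comm]
  refine sum_congr rfl fun i _ => ?_
  rw [sum_comm]
  exact sum_congr rfl fun j _ => sum_congr rfl fun k _ => by ring

theorem sum_abs_inner_le_mu1 {m n : ℕ} (A : Matrix (Fin m) (Fin n) ℝ) {s : ℕ}
    {S : Finset (Fin n)} (hS : S.card ≤ s) {i : Fin n} (hi : i ∉ S) :
    ∑ j ∈ S, |∑ k, A k i * A k j| ≤ mu1 A s := by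
  refine le_csSup ⟨∑ i, ∑ j, |∑ k, A k i * A k j|, ?_⟩ ⟨S, hS, i, hi, rfl⟩
  rintro t ⟨T, -, i', -, rfl⟩
  exact (sum_le_sum_of_subset_of_nonneg (subset_univ T) fun j _ _ => abs_nonneg _).trans
    (single_le_sum (f := fun i => ∑ j, |∑ k, A k i * A k j|)
      (fun i _ => sum_nonneg fun j _ => abs_nonneg _) (mem_univ i'))

theorem stmt0_general {m n : ℕ} (A : Matrix (Fin m) (Fin n) ℝ)
    (hA : ∀ j, ∑ k, (A k j) ^ 2 = 1)
    (s : ℕ)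
    (x : Fin n → ℝ)
    (hx : (Finset.univ.filter fun i => x i ≠ 0).card ≤ s) :
    (1 - mu1 A (s - 1)) * ∑ i, (x i) ^ 2 ≤ ∑ k, (A.mulVec x k) ^ 2 ∧
      ∑ k, (A.mulVec x k) ^ 2 ≤ (1 + mu1 A (s - 1)) * ∑ i, (x i) ^ 2 := by
  set S := univ.filter fun i => x i ≠ 0
  have hsupp : ∀ i ∉ S, x i = 0 := by simp [S]
  have hdiag : ∀ i ∈ S, ∑ k, A k i * A k i = 1 := fun i _ => by simpa only [sq] using hA i
  have hsymm : ∀ i j, |∑ k, A k i * A k j| = |∑ k, A k j * A k i| := fun i j => by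
    simp only [mul_comm]
  have hrow : ∀ i ∈ S, ∑ j ∈ S.erase i, |∑ k, A k i * A k j| ≤ mu1 A (s - 1) := fun i hi =>
    sum_abs_inner_le_mu1 A (by rw [card_erase_of_mem hi]; omega) (notMem_erase i S)
  have hbound := abs_sum_sum_mul_sub_sum_sq_le S x hdiag hsymm hrow
  rw [← sum_mulVec_sq_eq_sum_sum_gram A S hsupp,
    sum_subset (subset_univ S) fun i _ hi => by rw [hsupp i hi, sq, mul_zero]] at hbound
  constructor <;> linarith [abs_le.mp hbound]

/-- For a matrix with ℓ2-normalized columns and any `s`-sparse vector `x`,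
`(1 − μ₁(A, s−1)) ‖x‖₂² ≤ ‖Ax‖₂² ≤ (1 + μ₁(A, s−1)) ‖x‖₂²`. -/
theorem stmt0 {m n : ℕ} (A : Matrix (Fin m) (Fin n) ℝ)
    (hA : ∀ j, ∑ k, (A k j) ^ 2 = 1)
    (s : ℕ) (hs1 : 1 ≤ s) (hsn : s ≤ n)
    (x : Fin n → ℝ)
    (hx : (Finset.univ.filter fun i => x i ≠ 0).card ≤ s) :
    (1 - mu1 A (s - 1)) * ∑ i, (x i) ^ 2 ≤ ∑ k, (A.mulVec x k) ^ 2 ∧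
      ∑ k, (A.mulVec x k) ^ 2 ≤ (1 + mu1 A (s - 1)) * ∑ i, (x i) ^ 2 :=
  stmt0_general A hA s x hx
end

section
/- Let A be an m×n real matrix whose columns A_1,…,A_n all have ℓ2-norm 1. If x ∈ ℝ^n is s-sparse and y ∈ ℝ^n is t-sparse (with 1 ≤ s, t and s+t−1 ≤ n−1), then |⟨Ax, Ay⟩ − ⟨x, y⟩| ≤ μ₁(A, s+t−1)·‖x‖₂·‖y‖₂. -/
open scoped Classical

open Finset Matrix

/-!
Write `G = AᵀA`. Since the columns of `A` are unit vectors, `G - 1` is the off-diagonal part of `G`,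
and `⟨Ax, Ay⟩ - ⟨x, y⟩ = xᵀ (G - 1) y` only involves the block of `G - 1` on `supp x × supp y`.
Every row and column of that block, its diagonal entry dropped, is a sum of at most `s + t - 1`
coherences `|⟨A_i, A_j⟩|` with `i` outside the index set, hence has `ℓ¹`-norm at most
`μ₁(A, s + t - 1)`, and the Schur test bounds the bilinear form by `μ₁ ‖x‖ ‖y‖`.
-/

theorem Finset.abs_sum_sum_mul_mul_le_of_sum_abs_le {ι κ : Type*} (S : Finset ι) (T : Finset κ)
    (M : ι → κ → ℝ) (x : ι → ℝ) (y : κ → ℝ) {R C : ℝ}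
    (hrow : ∀ i ∈ S, ∑ j ∈ T, |M i j| ≤ R) (hcol : ∀ j ∈ T, ∑ i ∈ S, |M i j| ≤ C) :
    |∑ i ∈ S, ∑ j ∈ T, x i * M i j * y j| ≤
      √R * √C * √(∑ i ∈ S, x i ^ 2) * √(∑ j ∈ T, y j ^ 2) := by
  have hxR : ∑ i ∈ S, ∑ j ∈ T, x i ^ 2 * |M i j| ≤ R * ∑ i ∈ S, x i ^ 2 := by
    rw [mul_sum]
    refine sum_le_sum fun i hi => ?_
    rw [← mul_sum, mul_comm]
    exact mul_le_mul_of_nonneg_right (hrow i hi) (sq_nonneg _)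
  have hyC : ∑ i ∈ S, ∑ j ∈ T, y j ^ 2 * |M i j| ≤ C * ∑ j ∈ T, y j ^ 2 := by
    rw [sum_comm, mul_sum]
    refine sum_le_sum fun j hj => ?_
    rw [← mul_sum, mul_comm]
    exact mul_le_mul_of_nonneg_right (hcol j hj) (sq_nonneg _)
  calc |∑ i ∈ S, ∑ j ∈ T, x i * M i j * y j|
      ≤ ∑ i ∈ S, ∑ j ∈ T, |x i * M i j * y j| :=
        (abs_sum_le_sum_abs _ _).trans (sum_le_sum fun i _ => abs_sum_le_sum_abs _ _)
    _ = ∑ p ∈ S ×ˢ T, √(x p.1 ^ 2 * |M p.1 p.2|) * √(y p.2 ^ 2 * |M p.1 p.2|) := by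
        rw [sum_product]
        refine sum_congr rfl fun i _ => sum_congr rfl fun j _ => ?_
        rw [Real.sqrt_mul (sq_nonneg _), Real.sqrt_mul (sq_nonneg _), Real.sqrt_sq_eq_abs,
          Real.sqrt_sq_eq_abs, abs_mul, abs_mul]
        linear_combination (-(|x i| * |y j|)) * Real.mul_self_sqrt (abs_nonneg (M i j))
    _ ≤ √(∑ p ∈ S ×ˢ T, x p.1 ^ 2 * |M p.1 p.2|) * √(∑ p ∈ S ×ˢ T, y p.2 ^ 2 * |M p.1 p.2|) :=
        Real.sum_sqrt_mul_sqrt_le _ (fun _ => by positivity) (fun _ => by positivity)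
    _ ≤ √(R * ∑ i ∈ S, x i ^ 2) * √(C * ∑ j ∈ T, y j ^ 2) := by
        rw [sum_product, sum_product]
        gcongr
    _ = √R * √C * √(∑ i ∈ S, x i ^ 2) * √(∑ j ∈ T, y j ^ 2) := by
        rw [Real.sqrt_mul' _ (sum_nonneg fun _ _ => sq_nonneg _),
          Real.sqrt_mul' _ (sum_nonneg fun _ _ => sq_nonneg _)]
        ring

theorem Matrix.dotProduct_mulVec_eq_sum_support {ι κ R : Type*} [Fintype ι] [Fintype κ]
    [Semiring R] (M : Matrix ι κ R) (x : ι → R) (y : κ → R) :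
    x ⬝ᵥ M *ᵥ y = ∑ i ∈ univ.filter (fun i => x i ≠ 0),
      ∑ j ∈ univ.filter (fun j => y j ≠ 0), x i * M i j * y j := by
  rw [sum_filter_of_ne fun i _ h => ?_]
  · refine sum_congr rfl fun i _ => ?_
    rw [sum_filter_of_ne fun j _ h => ?_, mulVec, dotProduct, mul_sum]
    · exact sum_congr rfl fun j _ => (mul_assoc _ _ _).symm
    · intro hy; simp [hy] at h
  · intro hx; simp [hx] at h

theorem Matrix.mulVec_dotProduct_mulVec_sub_dotProduct {ι κ R : Type*} [Fintype ι] [Fintype κ]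
    [DecidableEq κ] [CommRing R] (A : Matrix ι κ R) (x y : κ → R) :
    A *ᵥ x ⬝ᵥ A *ᵥ y - x ⬝ᵥ y = x ⬝ᵥ (Aᵀ * A - 1) *ᵥ y := by
  rw [sub_mulVec, dotProduct_sub, one_mulVec, dotProduct_mulVec, ← vecMul_transpose,
    vecMul_vecMul, ← dotProduct_mulVec]

section Coherence

variable {m n : ℕ} (A : Matrix (Fin m) (Fin n) ℝ)

theorem mu1_nonneg (s : ℕ) : 0 ≤ mu1 A s :=
  Real.sSup_nonneg fun _ ⟨_, _, _, _, ht⟩ => ht ▸ sum_nonneg fun _ _ => abs_nonneg _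

theorem sum_abs_gram_le_mu1 {s : ℕ} {S : Finset (Fin n)} (hS : S.card ≤ s) {i : Fin n}
    (hi : i ∉ S) : ∑ j ∈ S, |(Aᵀ * A) i j| ≤ mu1 A s := by
  have hfin : {t : ℝ | ∃ S : Finset (Fin n), S.card ≤ s ∧ ∃ i : Fin n, i ∉ S ∧
      t = ∑ j ∈ S, |∑ k : Fin m, A k i * A k j|}.Finite :=
    (Set.finite_range fun p : Finset (Fin n) × Fin n => ∑ j ∈ p.1, |∑ k, A k p.2 * A k j|).subset
      fun _ ⟨S, _, i, _, ht⟩ => ⟨(S, i), ht.symm⟩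
  exact le_csSup hfin.bddAbove ⟨S, hS, i, hi, by simp [mul_apply]⟩

theorem sum_abs_gram_sub_one_le_mu1 (hA : ∀ j, ∑ k, (A k j) ^ 2 = 1) {r : ℕ} {T : Finset (Fin n)}
    (hT : T.card ≤ r) (i : Fin n) :
    ∑ j ∈ T, |(Aᵀ * A - 1 : Matrix (Fin n) (Fin n) ℝ) i j| ≤ mu1 A r := by
  have hdiag : (Aᵀ * A - 1 : Matrix (Fin n) (Fin n) ℝ) i i = 0 := by
    simp [mul_apply, ← hA i, sq]
  rw [← sum_erase _ (by rw [hdiag, abs_zero])]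
  calc ∑ j ∈ T.erase i, |(Aᵀ * A - 1 : Matrix (Fin n) (Fin n) ℝ) i j|
      = ∑ j ∈ T.erase i, |(Aᵀ * A) i j| :=
        sum_congr rfl fun j hj => by
          rw [Matrix.sub_apply, one_apply_ne (ne_of_mem_erase hj).symm, sub_zero]
    _ ≤ mu1 A r := sum_abs_gram_le_mu1 A (card_erase_le.trans hT) (notMem_erase i T)

end Coherence

theorem stmt1_general {m n : ℕ} (A : Matrix (Fin m) (Fin n) ℝ)
    (hA : ∀ j, ∑ k, (A k j) ^ 2 = 1)
    (s t : ℕ)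
    (x y : Fin n → ℝ)
    (hx : (Finset.univ.filter fun i => x i ≠ 0).card ≤ s)
    (hy : (Finset.univ.filter fun i => y i ≠ 0).card ≤ t) :
    |(∑ k, A.mulVec x k * A.mulVec y k) - ∑ i, x i * y i| ≤
      mu1 A (s + t - 1) * Real.sqrt (∑ i, (x i) ^ 2) * Real.sqrt (∑ i, (y i) ^ 2) := by
  set S := univ.filter fun i => x i ≠ 0
  set T := univ.filter fun j => y j ≠ 0
  set M : Matrix (Fin n) (Fin n) ℝ := Aᵀ * A - 1
  -- `i ∈ S` forces `s ≥ 1`, hence `#T ≤ t ≤ s + t - 1`; symmetrically for the columns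
  have hrow : ∀ i ∈ S, ∑ j ∈ T, |M i j| ≤ mu1 A (s + t - 1) := fun i hi =>
    sum_abs_gram_sub_one_le_mu1 A hA (by have := card_pos.2 ⟨i, hi⟩; omega) i
  have hsymm : M.IsSymm := IsSymm.sub (transpose_mul Aᵀ A) isSymm_one
  have hcol : ∀ j ∈ T, ∑ i ∈ S, |M i j| ≤ mu1 A (s + t - 1) := fun j hj => by
    simp_rw [← hsymm.apply _ j]
    exact sum_abs_gram_sub_one_le_mu1 A hA (by have := card_pos.2 ⟨j, hj⟩; omega) j
  have hsq : ∀ z : Fin n → ℝ, ∑ i ∈ univ.filter (fun i => z i ≠ 0), z i ^ 2 = ∑ i, z i ^ 2 :=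
    fun z => sum_filter_of_ne fun i _ h hz => h (by rw [hz, sq, zero_mul])
  have key := abs_sum_sum_mul_mul_le_of_sum_abs_le S T M x y hrow hcol
  rw [← dotProduct_mulVec_eq_sum_support, ← mulVec_dotProduct_mulVec_sub_dotProduct,
    Real.mul_self_sqrt (mu1_nonneg A _), hsq, hsq] at key
  exact key

/-- If `x` is `s`-sparse and `y` is `t`-sparse, then
`|⟨Ax, Ay⟩ − ⟨x, y⟩| ≤ μ₁(A, s+t−1) ‖x‖₂ ‖y‖₂`. -/
theorem stmt1 {m n : ℕ} (A : Matrix (Fin m) (Fin n) ℝ)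
    (hA : ∀ j, ∑ k, (A k j) ^ 2 = 1)
    (s t : ℕ) (hs : 1 ≤ s) (ht : 1 ≤ t) (hst : s + t - 1 ≤ n - 1)
    (x y : Fin n → ℝ)
    (hx : (Finset.univ.filter fun i => x i ≠ 0).card ≤ s)
    (hy : (Finset.univ.filter fun i => y i ≠ 0).card ≤ t) :
    |(∑ k, A.mulVec x k * A.mulVec y k) - ∑ i, x i * y i| ≤
      mu1 A (s + t - 1) * Real.sqrt (∑ i, (x i) ^ 2) * Real.sqrt (∑ i, (y i) ^ 2) :=
  stmt1_general A hA s t x y hx hy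
end

section
/- Let A be an m×n real matrix whose columns A_1,…,A_n all have ℓ2-norm 1. If x ∈ ℝ^n is s-sparse, y ∈ ℝ^n is t-sparse, and the supports of x and y are disjoint, then |⟨Ax, Ay⟩| ≤ μ₁(A, s+t−1)·‖x‖₂·‖y‖₂. -/
/-!
Write `G = Aᵀ A`, so that `⟨Ax, Ay⟩ = ∑_{i ∈ supp x} ∑_{j ∈ supp y} x_i y_j G_ij`. Since the
supports are disjoint, every row sum `∑_{j ∈ supp y} |G_ij|` with `i ∈ supp x` is one of the sums
in the definition of `μ₁(A, |supp y|)`, and `|supp y| ≤ t ≤ s + t - 1` as soon as `x ≠ 0`;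
symmetrically for the columns. The Schur test (Cauchy–Schwarz for the weights `|G_ij|`) bounds a
bilinear form whose row and column sums are at most `μ` by `μ ‖x‖ ‖y‖`.
-/

open scoped Classical

open Finset Matrix

theorem sum_sum_abs_mul_abs_mul_le_of_row_col_sum_le {ι κ : Type*} (S : Finset ι) (T : Finset κ)
    (g : ι → κ → ℝ) (hg : ∀ i ∈ S, ∀ j ∈ T, 0 ≤ g i j) {μ : ℝ} (hμ : 0 ≤ μ)
    (hrow : ∀ i ∈ S, ∑ j ∈ T, g i j ≤ μ) (hcol : ∀ j ∈ T, ∑ i ∈ S, g i j ≤ μ)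
    (u : ι → ℝ) (v : κ → ℝ) :
    ∑ i ∈ S, ∑ j ∈ T, |u i| * |v j| * g i j ≤
      μ * √(∑ i ∈ S, u i ^ 2) * √(∑ j ∈ T, v j ^ 2) := by
  have hu : ∑ p ∈ S ×ˢ T, (|u p.1| * √(g p.1 p.2)) ^ 2 ≤ μ * ∑ i ∈ S, u i ^ 2 := by
    rw [sum_product, mul_sum]
    refine sum_le_sum fun i hi => ?_
    calc ∑ j ∈ T, (|u i| * √(g i j)) ^ 2 = u i ^ 2 * ∑ j ∈ T, g i j := by
          rw [mul_sum]
          refine sum_congr rfl fun j hj => ?_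
          rw [mul_pow, sq_abs, Real.sq_sqrt (hg i hi j hj)]
      _ ≤ u i ^ 2 * μ := mul_le_mul_of_nonneg_left (hrow i hi) (sq_nonneg _)
      _ = μ * u i ^ 2 := mul_comm _ _
  have hv : ∑ p ∈ S ×ˢ T, (|v p.2| * √(g p.1 p.2)) ^ 2 ≤ μ * ∑ j ∈ T, v j ^ 2 := by
    rw [sum_product_right, mul_sum]
    refine sum_le_sum fun j hj => ?_
    calc ∑ i ∈ S, (|v j| * √(g i j)) ^ 2 = v j ^ 2 * ∑ i ∈ S, g i j := by
          rw [mul_sum]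
          refine sum_congr rfl fun i hi => ?_
          rw [mul_pow, sq_abs, Real.sq_sqrt (hg i hi j hj)]
      _ ≤ v j ^ 2 * μ := mul_le_mul_of_nonneg_left (hcol j hj) (sq_nonneg _)
      _ = μ * v j ^ 2 := mul_comm _ _
  calc ∑ i ∈ S, ∑ j ∈ T, |u i| * |v j| * g i j
      = ∑ p ∈ S ×ˢ T, (|u p.1| * √(g p.1 p.2)) * (|v p.2| * √(g p.1 p.2)) := by
        rw [sum_product]
        refine sum_congr rfl fun i hi => sum_congr rfl fun j hj => ?_
        rw [mul_mul_mul_comm, Real.mul_self_sqrt (hg i hi j hj)]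
    _ ≤ √(μ * ∑ i ∈ S, u i ^ 2) * √(μ * ∑ j ∈ T, v j ^ 2) :=
        (Real.sum_mul_le_sqrt_mul_sqrt _ _ _).trans <|
          mul_le_mul (Real.sqrt_le_sqrt hu) (Real.sqrt_le_sqrt hv) (Real.sqrt_nonneg _)
            (Real.sqrt_nonneg _)
    _ = μ * √(∑ i ∈ S, u i ^ 2) * √(∑ j ∈ T, v j ^ 2) := by
        rw [Real.sqrt_mul hμ, Real.sqrt_mul hμ, mul_mul_mul_comm, Real.mul_self_sqrt hμ,
          mul_assoc]

section Gram

variable {m n : Type*} [Fintype m] (A : Matrix m n ℝ)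

theorem sum_mulVec_mul_mulVec [Fintype n] (x y : n → ℝ) :
    ∑ k, (A *ᵥ x) k * (A *ᵥ y) k = ∑ i, ∑ j, x i * y j * (Aᵀ * A) i j := by
  simp only [mulVec, dotProduct, sum_mul_sum, Matrix.mul_apply, transpose_apply]
  simp_rw [mul_sum]
  rw [sum_comm]
  refine sum_congr rfl fun i _ => ?_
  rw [sum_comm]
  exact sum_congr rfl fun j _ => sum_congr rfl fun k _ => by ring

theorem transpose_mul_self_apply_comm (i j : n) : (Aᵀ * A) i j = (Aᵀ * A) j i := by
  simp only [Matrix.mul_apply, transpose_apply, mul_comm]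

theorem abs_sum_mulVec_mul_mulVec_le [Fintype n] {x y : n → ℝ} {S T : Finset n}
    (hxS : ∀ i ∉ S, x i = 0) (hyT : ∀ j ∉ T, y j = 0) {μ : ℝ} (hμ : 0 ≤ μ)
    (hS : ∀ i ∈ S, ∑ j ∈ T, |(Aᵀ * A) i j| ≤ μ)
    (hT : ∀ j ∈ T, ∑ i ∈ S, |(Aᵀ * A) j i| ≤ μ) :
    |∑ k, (A *ᵥ x) k * (A *ᵥ y) k| ≤ μ * √(∑ i, x i ^ 2) * √(∑ j, y j ^ 2) := by
  have hsupp : ∑ i, ∑ j, x i * y j * (Aᵀ * A) i j =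
      ∑ i ∈ S, ∑ j ∈ T, x i * y j * (Aᵀ * A) i j := by
    rw [← sum_subset (subset_univ S) fun i _ hi => by simp [hxS i hi]]
    refine sum_congr rfl fun i _ => ?_
    exact (sum_subset (subset_univ T) fun j _ hj => by simp [hyT j hj]).symm
  have hT' : ∀ j ∈ T, ∑ i ∈ S, |(Aᵀ * A) i j| ≤ μ := by
    simpa only [transpose_mul_self_apply_comm A _ (_ : n)] using hT
  calc |∑ k, (A *ᵥ x) k * (A *ᵥ y) k|
      = |∑ i ∈ S, ∑ j ∈ T, x i * y j * (Aᵀ * A) i j| := by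
        rw [sum_mulVec_mul_mulVec, hsupp]
    _ ≤ ∑ i ∈ S, ∑ j ∈ T, |x i| * |y j| * |(Aᵀ * A) i j| := by
        refine (abs_sum_le_sum_abs _ _).trans (sum_le_sum fun i _ => ?_)
        refine (abs_sum_le_sum_abs _ _).trans_eq (sum_congr rfl fun j _ => ?_)
        rw [abs_mul, abs_mul]
    _ ≤ μ * √(∑ i ∈ S, x i ^ 2) * √(∑ j ∈ T, y j ^ 2) :=
        sum_sum_abs_mul_abs_mul_le_of_row_col_sum_le S T _ (fun _ _ _ _ => abs_nonneg _) hμ hS hT'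
          x y
    _ ≤ μ * √(∑ i, x i ^ 2) * √(∑ j, y j ^ 2) := by
        gcongr <;> exact subset_univ _

end Gram

section CumulativeCoherence

variable {m n : ℕ} (A : Matrix (Fin m) (Fin n) ℝ)

theorem sum_abs_transpose_mul_self_le_mu1 {s : ℕ} {S : Finset (Fin n)} (hS : #S ≤ s) {i : Fin n}
    (hi : i ∉ S) : ∑ j ∈ S, |(Aᵀ * A) i j| ≤ mu1 A s := by
  refine le_csSup ?_ ⟨S, hS, i, hi, by simp only [Matrix.mul_apply, transpose_apply]⟩
  refine (Set.finite_range fun p : Finset (Fin n) × Fin n =>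
    ∑ j ∈ p.1, |∑ k, A k p.2 * A k j|).subset ?_ |>.bddAbove
  rintro _ ⟨S, -, i, -, rfl⟩
  exact ⟨(S, i), rfl⟩

end CumulativeCoherence

theorem stmt2_general {m n : ℕ} (A : Matrix (Fin m) (Fin n) ℝ)
    (s t : ℕ)
    (x y : Fin n → ℝ)
    (hx : (Finset.univ.filter fun i => x i ≠ 0).card ≤ s)
    (hy : (Finset.univ.filter fun i => y i ≠ 0).card ≤ t)
    (hdisj : ∀ i, x i = 0 ∨ y i = 0) :
    |∑ k, A.mulVec x k * A.mulVec y k| ≤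
      mu1 A (s + t - 1) * Real.sqrt (∑ i, (x i) ^ 2) * Real.sqrt (∑ i, (y i) ^ 2) := by
  set S := univ.filter fun i => x i ≠ 0
  set T := univ.filter fun i => y i ≠ 0
  have hST : Disjoint S T := disjoint_filter.2 fun i _ hxi hyi => (hdisj i).elim hxi hyi
  refine abs_sum_mulVec_mul_mulVec_le A (S := S) (T := T) (by simp [S]) (by simp [T])
    (mu1_nonneg A _) (fun i hi => ?_) (fun j hj => ?_)
  · have : 0 < #S := card_pos.2 ⟨i, hi⟩
    exact sum_abs_transpose_mul_self_le_mu1 A (by omega) (disjoint_left.1 hST hi)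
  · have : 0 < #T := card_pos.2 ⟨j, hj⟩
    exact sum_abs_transpose_mul_self_le_mu1 A (by omega) (disjoint_right.1 hST hj)

/-- If `x` is `s`-sparse, `y` is `t`-sparse, and the supports of `x` and `y` are disjoint,
then `|⟨Ax, Ay⟩| ≤ μ₁(A, s+t−1) ‖x‖₂ ‖y‖₂`. -/
theorem stmt2 {m n : ℕ} (A : Matrix (Fin m) (Fin n) ℝ)
    (hA : ∀ j, ∑ k, (A k j) ^ 2 = 1)
    (s t : ℕ)
    (x y : Fin n → ℝ)
    (hx : (Finset.univ.filter fun i => x i ≠ 0).card ≤ s)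
    (hy : (Finset.univ.filter fun i => y i ≠ 0).card ≤ t)
    (hdisj : ∀ i, x i = 0 ∨ y i = 0) :
    |∑ k, A.mulVec x k * A.mulVec y k| ≤
      mu1 A (s + t - 1) * Real.sqrt (∑ i, (x i) ^ 2) * Real.sqrt (∑ i, (y i) ^ 2) :=
  stmt2_general A s t x y hx hy hdisj
end

section
/- Let x, x̂ ∈ ℝ^n satisfy ‖x̂‖₁ ≤ ‖x‖₁ (as holds when x̂ minimizes the ℓ1-norm over a feasible set containing x), let s ∈ {1,…,n}, and set h = x̂ − x. Then ‖h_{−max(s)}‖₁ ≤ ‖h_{max(s)}‖₁ + 2‖x_{−max(s)}‖₁. -/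
open scoped Classical

/-
Writing `h = x̂ - x`, the triangle inequality on each coordinate gives, for any index set `S`,
`‖x‖₁ ≥ ‖x + h‖₁ ≥ ‖x_S‖₁ - ‖h_S‖₁ + ‖h_{Sᶜ}‖₁ - ‖x_{Sᶜ}‖₁`, i.e. `‖h_{Sᶜ}‖₁ ≤ ‖h_S‖₁ + 2‖x_{Sᶜ}‖₁`.
Take `S` to be the support of `x_{max(s)}`; since `h_{max(s)}` carries the largest `s` entries
of `h`, replacing `S` by the support of `h_{max(s)}` can only increase `‖h_S‖₁` and decrease
`‖h_{Sᶜ}‖₁`.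
-/

namespace Finset

variable {ι M : Type*} [AddCommMonoid M] [PartialOrder M] [IsOrderedAddMonoid M]

theorem sum_le_sum_of_card_eq_of_forall_le (f : ι → M) {A B : Finset ι} (hcard : #A = #B)
    (hB : ∀ i ∈ B, ∀ j ∉ B, f j ≤ f i) :
    ∑ j ∈ A, f j ≤ ∑ j ∈ B, f j := by
  rw [← sum_inter_add_sum_sdiff A B, ← sum_inter_add_sum_sdiff B A, inter_comm B A]
  gcongr 1
  let e : (A \ B : Finset ι) ≃ (B \ A : Finset ι) := equivOfCardEq (card_sdiff_comm hcard)
  calc ∑ j ∈ A \ B, f j = ∑ j : (A \ B : Finset ι), f j := (sum_coe_sort _ _).symm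
    _ ≤ ∑ j : (A \ B : Finset ι), f (e j) :=
        sum_le_sum fun j _ ↦ hB _ (mem_sdiff.mp (e j).2).1 _ (mem_sdiff.mp j.2).2
    _ = ∑ j : (B \ A : Finset ι), f j := e.sum_comp fun j ↦ f j
    _ = ∑ j ∈ B \ A, f j := sum_coe_sort _ _

end Finset

open Finset in
theorem sum_compl_norm_sub_le_of_sum_norm_le {ι E : Type*} [Fintype ι] [DecidableEq ι]
    [SeminormedAddCommGroup E]
    (x y : ι → E) (hle : ∑ i, ‖y i‖ ≤ ∑ i, ‖x i‖) (S : Finset ι) :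
    ∑ j ∈ Sᶜ, ‖y j - x j‖ ≤ ∑ j ∈ S, ‖y j - x j‖ + 2 * ∑ j ∈ Sᶜ, ‖x j‖ := by
  have hS : ∑ j ∈ S, (‖x j‖ - ‖y j - x j‖) ≤ ∑ j ∈ S, ‖y j‖ :=
    sum_le_sum fun j _ ↦ by
      have := norm_sub_norm_le (x j) (x j - y j)
      rw [sub_sub_cancel, norm_sub_rev] at this
      linarith
  have hSc : ∑ j ∈ Sᶜ, (‖y j - x j‖ - ‖x j‖) ≤ ∑ j ∈ Sᶜ, ‖y j‖ :=
    sum_le_sum fun j _ ↦ by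
      have := norm_sub_norm_le (y j - x j) (-x j)
      rw [norm_neg, sub_neg_eq_add, sub_add_cancel] at this
      linarith
  rw [sum_sub_distrib] at hS hSc
  have hy := sum_add_sum_compl S fun i ↦ ‖y i‖
  have hx := sum_add_sum_compl S fun i ↦ ‖x i‖
  linarith

theorem stmt6_general {n : ℕ} (x xh : Fin n → ℝ)
    (hmin : ∑ i, |xh i| ≤ ∑ i, |x i|)
    (s : ℕ)
    (Sh : Finset (Fin n)) (hShcard : Sh.card = s)
    (hShmax : ∀ i ∈ Sh, ∀ j ∉ Sh, |xh j - x j| ≤ |xh i - x i|)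
    (Sx : Finset (Fin n)) (hSxcard : Sx.card = s) :
    ∑ j ∈ Shᶜ, |xh j - x j| ≤ (∑ j ∈ Sh, |xh j - x j|) + 2 * ∑ j ∈ Sxᶜ, |x j| := by
  have hcone := sum_compl_norm_sub_le_of_sum_norm_le x xh hmin Sx
  simp only [Real.norm_eq_abs] at hcone
  have htop := Finset.sum_le_sum_of_card_eq_of_forall_le (fun i ↦ |xh i - x i|)
    (hSxcard.trans hShcard.symm) hShmax
  have hSh := Finset.sum_add_sum_compl Sh fun i ↦ |xh i - x i|
  have hSx := Finset.sum_add_sum_compl Sx fun i ↦ |xh i - x i|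
  linarith

/-- Cone constraint inequality: if `‖x̂‖₁ ≤ ‖x‖₁` and `h = x̂ − x`, then
`‖h_{−max(s)}‖₁ ≤ ‖h_{max(s)}‖₁ + 2‖x_{−max(s)}‖₁`.
Here `Sh` (resp. `Sx`) is any set of indices of the `s` largest-magnitude entries of `h`
(resp. of `x`). -/
theorem stmt6 {n : ℕ} (x xh : Fin n → ℝ)
    (hmin : ∑ i, |xh i| ≤ ∑ i, |x i|)
    (s : ℕ) (hs1 : 1 ≤ s) (hsn : s ≤ n)
    (Sh : Finset (Fin n)) (hShcard : Sh.card = s)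
    (hShmax : ∀ i ∈ Sh, ∀ j ∉ Sh, |xh j - x j| ≤ |xh i - x i|)
    (Sx : Finset (Fin n)) (hSxcard : Sx.card = s)
    (hSxmax : ∀ i ∈ Sx, ∀ j ∉ Sx, |x j| ≤ |x i|) :
    ∑ j ∈ Shᶜ, |xh j - x j| ≤ (∑ j ∈ Sh, |xh j - x j|) + 2 * ∑ j ∈ Sxᶜ, |x j| :=
  stmt6_general x xh hmin s Sh hShcard hShmax Sx hSxcard
end

section
/- Suppose n ≥ s ≥ 1, c₁ ≥ c₂ ≥ ⋯ ≥ c_n ≥ 0 are real numbers, ρ ≥ 0, and Σ_{j=1}^s c_j + ρ ≥ Σ_{j=s+1}^n c_j. Then for every real β ≥ 1, Σ_{j=s+1}^n c_j^β ≤ s·( ( (Σ_{j=1}^s c_j^β)/s )^{1/β} + ρ/s )^β. -/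
/-!
Let `P` be the `β`-power mean of the head `c₁, …, c_s` and `M = P + ρ / s`. Every tail entry is
at most the smallest head entry, hence at most `P ≤ M`, so `c_j ^ β ≤ M ^ (β - 1) * c_j` on the
tail. By the power mean inequality the head sum is at most `s P`, so the tail sum is at most
`s P + ρ = s M`, and therefore `∑_{tail} c_j ^ β ≤ M ^ (β - 1) * s M = s M ^ β`.
-/

open Finset

namespace Real

variable {ι : Type*}

lemma rpow_sub_one_mul_self {x y : ℝ} (hx : 0 ≤ x) (hy : y ≠ 0) : x ^ (y - 1) * x = x ^ y := by
  rw [← rpow_add_one' hx (by simpa using hy), sub_add_cancel]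

lemma rpow_le_rpow_sub_one_mul {x M p : ℝ} (hx : 0 ≤ x) (hxM : x ≤ M) (hp : 1 ≤ p) :
    x ^ p ≤ M ^ (p - 1) * x := by
  calc x ^ p = x ^ (p - 1) * x := (rpow_sub_one_mul_self hx (by linarith)).symm
    _ ≤ M ^ (p - 1) * x := by gcongr

lemma sum_rpow_le_rpow_sub_one_mul_sum (t : Finset ι) {f : ι → ℝ} {M p : ℝ}
    (hf : ∀ i ∈ t, 0 ≤ f i ∧ f i ≤ M) (hp : 1 ≤ p) :
    ∑ i ∈ t, f i ^ p ≤ M ^ (p - 1) * ∑ i ∈ t, f i := by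
  rw [mul_sum]
  exact sum_le_sum fun i hi => rpow_le_rpow_sub_one_mul (hf i hi).1 (hf i hi).2 hp

lemma sum_le_card_mul_rpow_mean (t : Finset ι) {f : ι → ℝ} (hf : ∀ i ∈ t, 0 ≤ f i) {p : ℝ}
    (hp : 1 ≤ p) : ∑ i ∈ t, f i ≤ #t * ((∑ i ∈ t, f i ^ p) / #t) ^ (1 / p) := by
  rcases t.eq_empty_or_nonempty with rfl | ht
  · simp
  have hcard : (0 : ℝ) < #t := by exact_mod_cast ht.card_pos
  have hmean := arith_mean_le_rpow_mean t (fun _ => (#t : ℝ)⁻¹) f (fun _ _ => by positivity)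
    (by simp [hcard.ne']) hf hp
  rw [← mul_sum, ← mul_sum, inv_mul_eq_div, inv_mul_eq_div, div_le_iff₀' hcard] at hmean
  exact hmean

lemma le_rpow_mean_of_forall_le {t : Finset ι} (ht : t.Nonempty) {f : ι → ℝ} {x p : ℝ}
    (hx : 0 ≤ x) (hxf : ∀ i ∈ t, x ≤ f i) (hp : 0 < p) :
    x ≤ ((∑ i ∈ t, f i ^ p) / #t) ^ (1 / p) := by
  have hcard : (0 : ℝ) < #t := by exact_mod_cast ht.card_pos
  have hsum : #t * x ^ p ≤ ∑ i ∈ t, f i ^ p := by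
    simpa using sum_le_sum fun i hi => rpow_le_rpow hx (hxf i hi) hp.le
  have hsum_nonneg : 0 ≤ (∑ i ∈ t, f i ^ p) / #t :=
    div_nonneg ((mul_nonneg hcard.le (rpow_nonneg hx p)).trans hsum) hcard.le
  rwa [one_div, le_rpow_inv_iff_of_pos hx hsum_nonneg hp, le_div_iff₀' hcard]

lemma sum_rpow_le_card_mul_rpow_mean_add {t u : Finset ι} (ht : t.Nonempty) {f : ι → ℝ}
    (hft : ∀ i ∈ t, 0 ≤ f i) (hfu : ∀ j ∈ u, 0 ≤ f j) (hdom : ∀ j ∈ u, ∀ i ∈ t, f j ≤ f i)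
    {ρ : ℝ} (hρ : 0 ≤ ρ) (hsum : ∑ j ∈ u, f j ≤ ∑ i ∈ t, f i + ρ) {p : ℝ} (hp : 1 ≤ p) :
    ∑ j ∈ u, f j ^ p ≤ #t * (((∑ i ∈ t, f i ^ p) / #t) ^ (1 / p) + ρ / #t) ^ p := by
  have hcard : (0 : ℝ) < #t := by exact_mod_cast ht.card_pos
  have hp0 : 0 < p := by linarith
  set P := ((∑ i ∈ t, f i ^ p) / #t) ^ (1 / p)
  set M := P + ρ / #t
  have hP : 0 ≤ P :=
    rpow_nonneg (div_nonneg (sum_nonneg fun i hi => rpow_nonneg (hft i hi) p) hcard.le) _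
  have hρt : 0 ≤ ρ / #t := div_nonneg hρ hcard.le
  have hu_le : ∀ j ∈ u, 0 ≤ f j ∧ f j ≤ M := fun j hj =>
    have := le_rpow_mean_of_forall_le ht (hfu j hj) (hdom j hj) hp0
    ⟨hfu j hj, by linarith⟩
  have hu_sum : ∑ j ∈ u, f j ≤ #t * M := by
    have := sum_le_card_mul_rpow_mean t hft hp
    rw [mul_add, mul_div_cancel₀ _ hcard.ne']
    linarith
  calc ∑ j ∈ u, f j ^ p ≤ M ^ (p - 1) * ∑ j ∈ u, f j :=
        sum_rpow_le_rpow_sub_one_mul_sum u hu_le hp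
    _ ≤ M ^ (p - 1) * (#t * M) := by gcongr
    _ = #t * M ^ p := by
        rw [mul_left_comm, rpow_sub_one_mul_self (by positivity) hp0.ne']

end Real

/-- If `c₁ ≥ c₂ ≥ ⋯ ≥ c_n ≥ 0`, `ρ ≥ 0` and `∑_{j=1}^s c_j + ρ ≥ ∑_{j=s+1}^n c_j`, then for
every real `β ≥ 1`,
`∑_{j=s+1}^n c_j^β ≤ s ((∑_{j=1}^s c_j^β / s)^{1/β} + ρ/s)^β`. -/
theorem stmt8 (n s : ℕ) (hs : 1 ≤ s) (hsn : s ≤ n) (c : ℕ → ℝ)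
    (hmono : ∀ j, 1 ≤ j → j + 1 ≤ n → c (j + 1) ≤ c j)
    (hnonneg : ∀ j, 1 ≤ j → j ≤ n → 0 ≤ c j)
    (ρ : ℝ) (hρ : 0 ≤ ρ)
    (hsum : ∑ j ∈ Finset.Icc (s + 1) n, c j ≤ (∑ j ∈ Finset.Icc 1 s, c j) + ρ)
    (β : ℝ) (hβ : 1 ≤ β) :
    ∑ j ∈ Finset.Icc (s + 1) n, c j ^ β ≤
      (s : ℝ) * (((∑ j ∈ Finset.Icc 1 s, c j ^ β) / s) ^ (1 / β) + ρ / s) ^ β := by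
  have hanti : AntitoneOn c (Set.Icc 1 n) :=
    antitoneOn_of_succ_le Set.ordConnected_Icc fun j _ hj hj' => hmono j hj.1 hj'.2
  have hhead : ∀ i ∈ Icc 1 s, 0 ≤ c i := fun i hi =>
    hnonneg i (mem_Icc.1 hi).1 ((mem_Icc.1 hi).2.trans hsn)
  have htail : ∀ j ∈ Icc (s + 1) n, 0 ≤ c j := fun j hj =>
    hnonneg j (by grind) (mem_Icc.1 hj).2
  have hdom : ∀ j ∈ Icc (s + 1) n, ∀ i ∈ Icc 1 s, c j ≤ c i := fun j hj i hi =>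
    hanti (by grind) (by grind) (by grind)
  simpa using Real.sum_rpow_le_card_mul_rpow_mean_add (nonempty_Icc.2 hs) hhead htail hdom hρ
    hsum hβ
end

section
/- Let A ∈ ℝ^{m×n}, x ∈ ℝ^n, λ > 0, and b = Ax + z with ‖Aᵀz‖_∞ ≤ λ/2. Let x̂ be a minimizer of y ↦ λ‖y‖₁ + (1/2)‖Ay − b‖₂² (the Lasso), and set h = x̂ − x. Then for every s ∈ {1,…,n}: ‖Ah‖₂² + λ‖h_{−max(s)}‖₁ ≤ 3λ‖h_{max(s)}‖₁ + 4λ‖x_{−max(s)}‖₁. -/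
/-!
Comparing the Lasso objective at `x̂` with its value at `x`, and bounding the cross term
`⟨Ah, z⟩ = ⟨h, Aᵀz⟩` by `(λ/2)‖h‖₁`, gives the basic inequality
`‖Ah‖₂² ≤ 2λ(‖x‖₁ - ‖x̂‖₁) + λ‖h‖₁`. On any index set `S`, the triangle inequality bounds
`‖x‖₁ - ‖x̂‖₁` by `‖h_S‖₁ - ‖h_Sᶜ‖₁ + 2‖x_Sᶜ‖₁`; taking `S` of size `s`, `‖h_S‖₁` is at most
the mass `‖h_{max(s)}‖₁` of the `s` largest entries of `h`, and the two bounds combine linearly.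
-/

open Matrix Finset

lemma Finset.sum_le_sum_of_card_eq_of_forall_le_s10 {ι M : Type*} [DecidableEq ι] [AddCommMonoid M]
    [LinearOrder M] [IsOrderedAddMonoid M] {f : ι → M} {S T : Finset ι}
    (hcard : T.card = S.card) (hS : ∀ i ∈ S, ∀ j ∉ S, f j ≤ f i) :
    ∑ j ∈ T, f j ≤ ∑ j ∈ S, f j := by
  have hcard' : (T \ S).card = (S \ T).card := by
    have := card_sdiff_add_card_inter T S
    have := card_sdiff_add_card_inter S T
    rw [inter_comm] at this
    omega
  have hdiff : ∑ j ∈ T \ S, f j ≤ ∑ j ∈ S \ T, f j := by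
    rcases (S \ T).eq_empty_or_nonempty with hST | hST
    · rw [hST, card_empty, card_eq_zero] at hcard'
      rw [hcard', hST]
    obtain ⟨i₀, hi₀, hmin⟩ := exists_min_image (S \ T) f hST
    calc ∑ j ∈ T \ S, f j ≤ (T \ S).card • f i₀ :=
          sum_le_card_nsmul _ _ _ fun j hj => hS i₀ (mem_sdiff.1 hi₀).1 j (mem_sdiff.1 hj).2
      _ = (S \ T).card • f i₀ := by rw [hcard']
      _ ≤ ∑ j ∈ S \ T, f j := card_nsmul_le_sum _ _ _ hmin
  rw [← sum_inter_add_sum_sdiff T S, ← sum_inter_add_sum_sdiff S T, inter_comm]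
  gcongr

lemma dotProduct_le_mul_sum_abs {n : Type*} [Fintype n] (v : n → ℝ) {w : n → ℝ} {c : ℝ}
    (hw : ∀ j, |w j| ≤ c) : v ⬝ᵥ w ≤ c * ∑ j, |v j| := by
  rw [mul_sum]
  refine sum_le_sum fun j _ => ?_
  calc v j * w j ≤ |v j| * |w j| := by rw [← abs_mul]; exact le_abs_self _
    _ ≤ c * |v j| := by rw [mul_comm]; gcongr; exact hw j

theorem lasso_basic_inequality {m n : Type*} [Fintype m] [Fintype n] (A : Matrix m n ℝ)
    {lam : ℝ} {x xh : n → ℝ} {z : m → ℝ} (hz : ∀ j, |(Aᵀ *ᵥ z) j| ≤ lam / 2)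
    (hmin : lam * ∑ i, |xh i| + 1 / 2 * ∑ k, ((A *ᵥ xh) k - (A *ᵥ x + z) k) ^ 2 ≤
      lam * ∑ i, |x i| + 1 / 2 * ∑ k, ((A *ᵥ x) k - (A *ᵥ x + z) k) ^ 2) :
    ∑ k, (A *ᵥ (xh - x)) k ^ 2 ≤
      2 * lam * (∑ i, |x i| - ∑ i, |xh i|) + lam * ∑ i, |xh i - x i| := by
  have hres : ∀ k, (A *ᵥ xh) k - ((A *ᵥ x) k + z k) = (A *ᵥ (xh - x)) k - z k := fun k => by
    rw [mulVec_sub, Pi.sub_apply]; ring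
  have hexpand : ∑ k, ((A *ᵥ (xh - x)) k - z k) ^ 2 =
      ∑ k, (A *ᵥ (xh - x)) k ^ 2 - 2 * (A *ᵥ (xh - x)) ⬝ᵥ z + ∑ k, z k ^ 2 := by
    simp only [dotProduct, sub_sq, sum_add_distrib, sum_sub_distrib, mul_sum, mul_assoc]
  have hcross : (A *ᵥ (xh - x)) ⬝ᵥ z ≤ lam / 2 * ∑ i, |xh i - x i| := by
    rw [← vecMul_transpose, ← dotProduct_mulVec]
    exact dotProduct_le_mul_sum_abs (xh - x) hz
  simp only [Pi.add_apply, hres, hexpand, sub_add_cancel_left, neg_sq] at hmin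
  linarith

lemma sum_abs_sub_sum_abs_le {n : Type*} [Fintype n] [DecidableEq n] (x y : n → ℝ)
    (S : Finset n) :
    ∑ i, |x i| - ∑ i, |y i| ≤
      ∑ j ∈ S, |y j - x j| - ∑ j ∈ Sᶜ, |y j - x j| + 2 * ∑ j ∈ Sᶜ, |x j| := by
  have hS : ∑ j ∈ S, (|x j| - |y j|) ≤ ∑ j ∈ S, |y j - x j| :=
    sum_le_sum fun j _ => by rw [abs_sub_comm]; exact abs_sub_abs_le_abs_sub _ _
  have hSc : ∑ j ∈ Sᶜ, (|x j| - |y j|) ≤ ∑ j ∈ Sᶜ, (2 * |x j| - |y j - x j|) :=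
    sum_le_sum fun j _ => by linarith [abs_sub (y j) (x j)]
  rw [sum_sub_distrib] at hS hSc
  rw [sum_sub_distrib, ← mul_sum] at hSc
  rw [← sum_add_sum_compl S fun i => |x i|, ← sum_add_sum_compl S fun i => |y i|]
  linarith

theorem stmt10_general {m n : ℕ} (A : Matrix (Fin m) (Fin n) ℝ)
    (lam : ℝ) (hlam : 0 < lam)
    (x : Fin n → ℝ) (z : Fin m → ℝ) (b : Fin m → ℝ)
    (hb : b = A.mulVec x + z)
    (hz : ∀ i, |A.transpose.mulVec z i| ≤ lam / 2)
    (xh : Fin n → ℝ)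
    (hmin : ∀ y : Fin n → ℝ,
      lam * (∑ i, |xh i|) + (1 / 2) * ∑ k, (A.mulVec xh k - b k) ^ 2 ≤
        lam * (∑ i, |y i|) + (1 / 2) * ∑ k, (A.mulVec y k - b k) ^ 2)
    (s : ℕ)
    (Sh : Finset (Fin n)) (hShcard : Sh.card = s)
    (hShmax : ∀ i ∈ Sh, ∀ j ∉ Sh, |xh j - x j| ≤ |xh i - x i|)
    (Sx : Finset (Fin n)) (hSxcard : Sx.card = s) :
    (∑ k, (A.mulVec (xh - x) k) ^ 2) + lam * ∑ j ∈ Shᶜ, |xh j - x j| ≤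
      3 * lam * (∑ j ∈ Sh, |xh j - x j|) + 4 * lam * ∑ j ∈ Sxᶜ, |x j| := by
  subst hb
  have hbasic := lasso_basic_inequality A hz (hmin x)
  have hcone := sum_abs_sub_sum_abs_le x xh Sx
  have htop : ∑ j ∈ Sx, |xh j - x j| ≤ ∑ j ∈ Sh, |xh j - x j| :=
    sum_le_sum_of_card_eq_of_forall_le_s10 (hSxcard.trans hShcard.symm) hShmax
  have hsplitx := sum_add_sum_compl Sx fun j => |xh j - x j|
  have hsplith := sum_add_sum_compl Sh fun j => |xh j - x j|
  nlinarith [mul_le_mul_of_nonneg_left hcone hlam.le, mul_le_mul_of_nonneg_left htop hlam.le]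

/-- Modified cone constraint inequality for the Lasso: if `‖Aᵀz‖_∞ ≤ λ/2` and `x̂` minimizes
`y ↦ λ‖y‖₁ + ½‖Ay − b‖₂²`, then with `h = x̂ − x`,
`‖Ah‖₂² + λ‖h_{−max(s)}‖₁ ≤ 3λ‖h_{max(s)}‖₁ + 4λ‖x_{−max(s)}‖₁`.
Here `Sh` (resp. `Sx`) is any set of indices of the `s` largest-magnitude entries of `h`
(resp. of `x`). -/
theorem stmt10 {m n : ℕ} (A : Matrix (Fin m) (Fin n) ℝ)
    (lam : ℝ) (hlam : 0 < lam)
    (x : Fin n → ℝ) (z : Fin m → ℝ) (b : Fin m → ℝ)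
    (hb : b = A.mulVec x + z)
    (hz : ∀ i, |A.transpose.mulVec z i| ≤ lam / 2)
    (xh : Fin n → ℝ)
    (hmin : ∀ y : Fin n → ℝ,
      lam * (∑ i, |xh i|) + (1 / 2) * ∑ k, (A.mulVec xh k - b k) ^ 2 ≤
        lam * (∑ i, |y i|) + (1 / 2) * ∑ k, (A.mulVec y k - b k) ^ 2)
    (s : ℕ) (hs1 : 1 ≤ s) (hsn : s ≤ n)
    (Sh : Finset (Fin n)) (hShcard : Sh.card = s)
    (hShmax : ∀ i ∈ Sh, ∀ j ∉ Sh, |xh j - x j| ≤ |xh i - x i|)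
    (Sx : Finset (Fin n)) (hSxcard : Sx.card = s)
    (hSxmax : ∀ i ∈ Sx, ∀ j ∉ Sx, |x j| ≤ |x i|) :
    (∑ k, (A.mulVec (xh - x) k) ^ 2) + lam * ∑ j ∈ Shᶜ, |xh j - x j| ≤
      3 * lam * (∑ j ∈ Sh, |xh j - x j|) + 4 * lam * ∑ j ∈ Sxᶜ, |x j| :=
  stmt10_general A lam hlam x z b hb hz xh hmin s Sh hShcard hShmax Sx hSxcard
end

section
/- Let A be an m×n real matrix whose columns have ℓ2-norm 1, let λ > 0, let x ∈ ℝ^n, and define H(ξ, x) = (λ²/8)·‖ξ‖₀ + ‖Ax − Aξ‖₂² for ξ ∈ ℝ^n, where ‖ξ‖₀ is the number of nonzero entries of ξ. If x̄ is a minimizer of ξ ↦ H(ξ, x) over ℝ^n, then ‖Aᵀ(Ax̄ − Ax)‖_∞ ≤ λ/2. -/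
/-!
Moving a single coordinate `i` of `x̄` by `-gᵢ`, where `g = Aᵀ(Ax̄ − Ax)`, is an exact line search
along the unit column `aᵢ`: it lowers the residual `‖Ax − Aξ‖₂²` by exactly `gᵢ²` and raises
`‖ξ‖₀` by at most one. Minimality of `x̄` therefore forces `gᵢ² ≤ λ²/8 < (λ/2)²`.
-/

open scoped Classical

open Finset Matrix

lemma card_filter_sub_single_ne_zero_le {ι M : Type*} [Fintype ι] [DecidableEq ι] [AddGroup M]
    (v : ι → M) (i : ι) (a : M) :
    #{j | (v - Pi.single i a : ι → M) j ≠ 0} ≤ #{j | v j ≠ 0} + 1 := by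
  refine (card_le_card fun j hj => ?_).trans (card_insert_le i _)
  rcases eq_or_ne j i with rfl | hji
  · exact mem_insert_self j _
  · simp_all

lemma sum_sq_sub_proj {κ : Type*} [Fintype κ] (r c : κ → ℝ) (hc : ∑ k, c k ^ 2 = 1) :
    ∑ k, (r k - (∑ l, c l * r l) * c k) ^ 2 = ∑ k, r k ^ 2 - (∑ k, c k * r k) ^ 2 := by
  set p := ∑ l, c l * r l
  have expand : ∀ k, (r k - p * c k) ^ 2 = r k ^ 2 - 2 * p * (c k * r k) + p ^ 2 * c k ^ 2 :=
    fun k => by ring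
  simp only [expand, sum_add_distrib, sum_sub_distrib, ← mul_sum, hc]
  ring

lemma sq_transpose_mulVec_residual_le {ι κ : Type*} [Fintype ι] [Fintype κ] [DecidableEq ι]
    (A : Matrix κ ι ℝ) (b : κ → ℝ) {μ : ℝ} (hμ : 0 ≤ μ) (xb : ι → ℝ)
    (hmin : ∀ ξ : ι → ℝ,
      μ * #{j | xb j ≠ 0} + ∑ k, (b k - (A *ᵥ xb) k) ^ 2 ≤
        μ * #{j | ξ j ≠ 0} + ∑ k, (b k - (A *ᵥ ξ) k) ^ 2)
    (i : ι) (hA : ∑ k, A k i ^ 2 = 1) :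
    (Aᵀ *ᵥ (A *ᵥ xb - b)) i ^ 2 ≤ μ := by
  set g := (Aᵀ *ᵥ (A *ᵥ xb - b)) i
  have hg : g = -∑ k, A k i * (b k - (A *ᵥ xb) k) := by
    simp only [g, mulVec, dotProduct, transpose_apply, Pi.sub_apply, ← sum_neg_distrib]
    exact sum_congr rfl fun k _ => by ring
  have hres : ∑ k, (b k - (A *ᵥ (xb - Pi.single i g)) k) ^ 2
      = ∑ k, (b k - (A *ᵥ xb) k) ^ 2 - g ^ 2 := by
    have hstep : ∀ k, b k - (A *ᵥ (xb - Pi.single i g)) k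
        = b k - (A *ᵥ xb) k - (∑ l, A l i * (b l - (A *ᵥ xb) l)) * A k i := by
      intro k
      rw [mulVec_sub, Pi.sub_apply, mulVec_single, Pi.smul_apply, MulOpposite.smul_eq_mul_unop,
        MulOpposite.unop_op, col_apply, hg]
      ring
    simp only [hstep]
    rw [sum_sq_sub_proj _ _ hA, hg, neg_sq]
  have hcard : (#{j | (xb - Pi.single i g : ι → ℝ) j ≠ 0} : ℝ) ≤ #{j | xb j ≠ 0} + 1 := by
    exact_mod_cast card_filter_sub_single_ne_zero_le xb i g
  have hopt := hmin (xb - Pi.single i g)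
  rw [hres] at hopt
  nlinarith [mul_le_mul_of_nonneg_left hcard hμ]

/-- If `x̄` minimizes `ξ ↦ (λ²/8)‖ξ‖₀ + ‖Ax − Aξ‖₂²`, then
`‖Aᵀ(Ax̄ − Ax)‖_∞ ≤ λ/2`. -/
theorem stmt13 {m n : ℕ} (A : Matrix (Fin m) (Fin n) ℝ)
    (hA : ∀ j, ∑ k, (A k j) ^ 2 = 1)
    (lam : ℝ) (hlam : 0 < lam)
    (x : Fin n → ℝ) (xb : Fin n → ℝ)
    (hmin : ∀ ξ : Fin n → ℝ,
      lam ^ 2 / 8 * ((Finset.univ.filter fun i => xb i ≠ 0).card : ℝ) +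
          ∑ k, (A.mulVec x k - A.mulVec xb k) ^ 2 ≤
        lam ^ 2 / 8 * ((Finset.univ.filter fun i => ξ i ≠ 0).card : ℝ) +
          ∑ k, (A.mulVec x k - A.mulVec ξ k) ^ 2) :
    ∀ i, |A.transpose.mulVec (A.mulVec xb - A.mulVec x) i| ≤ lam / 2 := by
  intro i
  have hsq := sq_transpose_mulVec_residual_le A (A *ᵥ x) (by positivity) xb hmin i (hA i)
  refine abs_le_of_sq_le_sq (hsq.trans ?_) (by positivity)
  nlinarith
end

section
/- For every x ∈ ℝ^n (n ≥ 1): ‖x‖₂ − ‖x‖₁/√n ≤ (√n/4)·( max_{1≤j≤n} |x_j| − min_{1≤j≤n} |x_j| ). -/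
/-!
Write `a_i = |x_i| ∈ [m, M]`, `S = ∑ a_i`, `N = n`. From `(a_i - m)(M - a_i) ≥ 0` one gets
`∑ a_i² ≤ (M + m) S - N M m`, and completing the square in `S` shows
`N ((M + m) S - N M m) ≤ (S + N (M - m) / 4)²` as soon as `0 ≤ m ≤ M`.
Taking square roots and dividing by `√N` gives the inequality.
-/

open Finset

lemma sum_sq_le_of_forall_mem_Icc {ι : Type*} (s : Finset ι) {a : ι → ℝ} {m M : ℝ}
    (ha : ∀ i ∈ s, a i ∈ Set.Icc m M) :
    ∑ i ∈ s, a i ^ 2 ≤ (M + m) * ∑ i ∈ s, a i - #s * (M * m) := by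
  have hpoint : ∀ i ∈ s, a i ^ 2 ≤ (M + m) * a i - M * m := fun i hi => by
    nlinarith [mul_nonneg (sub_nonneg.2 (ha i hi).1) (sub_nonneg.2 (ha i hi).2)]
  calc ∑ i ∈ s, a i ^ 2 ≤ ∑ i ∈ s, ((M + m) * a i - M * m) := sum_le_sum hpoint
    _ = (M + m) * ∑ i ∈ s, a i - #s * (M * m) := by
      rw [sum_sub_distrib, ← mul_sum, sum_const, nsmul_eq_mul]

lemma mul_sub_le_sq_add {m M : ℝ} (hm : 0 ≤ m) (hmM : m ≤ M) (N S : ℝ) :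
    N * ((M + m) * S - N * (M * m)) ≤ (S + N * (M - m) / 4) ^ 2 := by
  -- the difference is `(S - N (M + 3m) / 4)² + N² m (M - m) / 2`
  nlinarith [sq_nonneg (S - N * (M + 3 * m) / 4), mul_nonneg (sq_nonneg N)
    (mul_nonneg hm (sub_nonneg.2 hmM))]

lemma sqrt_sub_div_sqrt_le {N q S m M : ℝ} (hN : 0 < N) (hS : 0 ≤ S) (hm : 0 ≤ m)
    (hmM : m ≤ M) (hq : q ≤ (M + m) * S - N * (M * m)) :
    √q - S / √N ≤ √N / 4 * (M - m) := by
  have hsqrtN : 0 < √N := Real.sqrt_pos.2 hN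
  have hbound : √N * √q ≤ S + N * (M - m) / 4 := by
    rw [← Real.sqrt_mul hN.le]
    refine Real.sqrt_le_iff.2 ⟨by nlinarith, ?_⟩
    exact (mul_le_mul_of_nonneg_left hq hN.le).trans (mul_sub_le_sq_add hm hmM N S)
  have hcancel : √N * (√q - S / √N - √N / 4 * (M - m)) = √N * √q - (S + N * (M - m) / 4) := by
    field_simp
    rw [Real.sq_sqrt hN.le]
    ring
  have : √N * (√q - S / √N - √N / 4 * (M - m)) ≤ 0 := by rw [hcancel]; linarith
  linarith [nonpos_of_mul_nonpos_right this hsqrtN]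

theorem sqrt_sum_sq_sub_sum_abs_div_sqrt_card_le {ι : Type*} {s : Finset ι} (hs : s.Nonempty)
    (x : ι → ℝ) :
    √(∑ i ∈ s, x i ^ 2) - (∑ i ∈ s, |x i|) / √(#s : ℝ) ≤
      √(#s : ℝ) / 4 * (s.sup' hs (fun j => |x j|) - s.inf' hs fun j => |x j|) := by
  set M := s.sup' hs fun j => |x j|
  set m := s.inf' hs fun j => |x j|
  have hmem : ∀ i ∈ s, |x i| ∈ Set.Icc m M := fun i hi =>
    ⟨inf'_le _ hi, le_sup' (fun j => |x j|) hi⟩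
  have hsq : ∑ i ∈ s, x i ^ 2 ≤ (M + m) * ∑ i ∈ s, |x i| - #s * (M * m) := by
    simpa only [sq_abs] using sum_sq_le_of_forall_mem_Icc s hmem
  obtain ⟨i₀, hi₀⟩ := hs
  exact sqrt_sub_div_sqrt_le (by exact_mod_cast card_pos.2 ⟨i₀, hi₀⟩)
    (sum_nonneg fun i _ => abs_nonneg _) (le_inf' _ _ fun i _ => abs_nonneg _)
    ((hmem i₀ hi₀).1.trans (hmem i₀ hi₀).2) hsq

/-- For every `x ∈ ℝⁿ`,
`‖x‖₂ − ‖x‖₁/√n ≤ (√n/4)(max_j |x_j| − min_j |x_j|)`. -/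
theorem stmt14 {n : ℕ} (hn : 1 ≤ n) (x : Fin n → ℝ) :
    Real.sqrt (∑ i, (x i) ^ 2) - (∑ i, |x i|) / Real.sqrt n ≤
      Real.sqrt n / 4 *
        ((Finset.univ.sup' (Finset.univ_nonempty_iff.mpr ⟨⟨0, hn⟩⟩) fun j => |x j|) -
          Finset.univ.inf' (Finset.univ_nonempty_iff.mpr ⟨⟨0, hn⟩⟩) fun j => |x j|) := by
  simpa only [card_univ, Fintype.card_fin] using
    sqrt_sum_sq_sub_sum_abs_div_sqrt_card_le (Finset.univ_nonempty_iff.mpr ⟨⟨0, hn⟩⟩) x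
end
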